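/- arXiv:1306.3706 — 2 statements merged into one kernel-verified Lean document; each statement's English description precedes it below -/
import Mathlib

section
/- For any λ ∈ ℝ^p with E‖X‖ < ∞, the following score identity holds: E[X (Y − 1/2) a_λ(X, Y)] = (1/2) E[X (Y − σ(λ'X))]. That is, the gradient of the local case-control subsample risk Q_λ evaluated at θ = λ equals half the full-population logistic score evaluated at λ, up to the factor ā(λ)^{-1}. -/
open MeasureTheory ProbabilityTheory Real Filter
open scoped ENNReal NNReal RealInnerProductSpace Topology BoundedContinuousFunction

noncomputable section

/-- Shorthand for `ℝ^d` with the Euclidean inner product. -/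
abbrev Evec (d : ℕ) := EuclideanSpace ℝ (Fin d)

/-- The logistic sigmoid `σ(t) = eᵗ / (1 + eᵗ)`. -/
def sigm (t : ℝ) : ℝ := Real.exp t / (1 + Real.exp t)

/-- The soft hinge function `h(η; π) = -π η + log (1 + e^η)`. -/
def softHinge (η pr : ℝ) : ℝ := -pr * η + Real.log (1 + Real.exp η)

variable {d : ℕ}

/-- The joint law of `(X, Y)` on `ℝ^d × ℝ` determined by the marginal law `ν` of `X`
and the conditional probability `pf x = P(Y = 1 | X = x)`; `Y ∈ {0, 1}`. -/
def jointLaw (ν : Measure (Evec d)) (pf : Evec d → ℝ) : Measure (Evec d × ℝ) :=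
  ν.bind fun x => ENNReal.ofReal (pf x) • Measure.dirac (x, (1 : ℝ)) +
    ENNReal.ofReal (1 - pf x) • Measure.dirac (x, (0 : ℝ))

/-- The logistic loss `ρ(θ; x, y) = -y θ'x + log (1 + exp (θ'x))` (intercept absorbed). -/
def logisticLoss (θ : Evec d) (xy : Evec d × ℝ) : ℝ :=
  -xy.2 * ⟪θ, xy.1⟫ + Real.log (1 + Real.exp ⟪θ, xy.1⟫)

/-- The conditional log-odds `f(x) = logit p(x)`. -/
def flogit (pf : Evec d → ℝ) (x : Evec d) : ℝ := Real.log (pf x / (1 - pf x))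

/-- Local case-control acceptance probability `a_λ(x, y) = |y - σ(λ'x)|`. -/
def accProb (lam : Evec d) (xy : Evec d × ℝ) : ℝ := |xy.2 - sigm ⟪lam, xy.1⟫|

/-- Marginal acceptance probability `ā(λ) = E[a_λ(X, Y)]`. -/
def aBar (μ : Measure (Evec d × ℝ)) (lam : Evec d) : ℝ := ∫ xy, accProb lam xy ∂μ

/-- Conditional acceptance probability `â_λ(x) = σ(λ'x)(1 - p(x)) + (1 - σ(λ'x)) p(x)`. -/
def aHat (pf : Evec d → ℝ) (lam x : Evec d) : ℝ :=
  sigm ⟪lam, x⟫ * (1 - pf x) + (1 - sigm ⟪lam, x⟫) * pf x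

/-- The tilted (biased subsampling) measure `dP_λ = a_λ dP / ā(λ)`. -/
def tiltedLaw (μ : Measure (Evec d × ℝ)) (lam : Evec d) : Measure (Evec d × ℝ) :=
  μ.withDensity fun xy => ENNReal.ofReal (accProb lam xy / aBar μ lam)

/-- Population risk under the tilted measure: `R_λ(θ) = E_{P_λ}[ρ(θ; X, Y)]`. -/
def Rpop (μ : Measure (Evec d × ℝ)) (lam θ : Evec d) : ℝ :=
  ∫ xy, logisticLoss θ xy ∂(tiltedLaw μ lam)

/-- Recentred population risk `Q_λ(θ) = R_λ(θ - λ)`. -/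
def Qpop (μ : Measure (Evec d × ℝ)) (lam θ : Evec d) : ℝ := Rpop μ lam (θ - lam)

/-- Nonseparability: no nonzero direction `v` separates the two classes. -/
def NonSep (μ : Measure (Evec d × ℝ)) : Prop :=
  ¬ ∃ v : Evec d, v ≠ 0 ∧ μ {xy | xy.2 = 0 ∧ 0 < ⟪v, xy.1⟫} = 0 ∧
    μ {xy | xy.2 = 1 ∧ ⟪v, xy.1⟫ < 0} = 0

/-- Nondegeneracy: there is no nonzero `v` with `E|v'X| = 0`. -/
def NonDegen (μ : Measure (Evec d × ℝ)) : Prop :=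
  ∀ v : Evec d, v ≠ 0 → ∫ xy, |⟪v, xy.1⟫| ∂μ ≠ 0

theorem MeasureTheory.Measure.ae_bind_of_forall_ae {α β : Type*} [MeasurableSpace α]
    [MeasurableSpace β] {m : Measure α} {κ : α → Measure β} {p : β → Prop}
    (hp : MeasurableSet {b | p b}) (h : ∀ a, ∀ᵐ b ∂κ a, p b) : ∀ᵐ b ∂m.bind κ, p b := by
  rw [ae_iff]
  refine nonpos_iff_eq_zero.mp ((Measure.bind_apply_le κ hp.compl).trans_eq ?_)
  simp only [Set.compl_ofPred, fun a => ae_iff.mp (h a), lintegral_zero]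

theorem jointLaw_ae_label_eq_zero_or_one (ν : Measure (Evec d)) (pf : Evec d → ℝ) :
    ∀ᵐ xy ∂(jointLaw ν pf), xy.2 = 0 ∨ xy.2 = 1 := by
  have hmeas : MeasurableSet {xy : Evec d × ℝ | xy.2 = 0 ∨ xy.2 = 1} :=
    (measurable_snd (measurableSet_singleton 0)).union (measurable_snd (measurableSet_singleton 1))
  refine Measure.ae_bind_of_forall_ae hmeas fun x => ?_
  rw [ae_add_measure_iff]
  exact ⟨Measure.ae_smul_measure ((ae_dirac_iff hmeas).mpr (Or.inr rfl)) _,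
    Measure.ae_smul_measure ((ae_dirac_iff hmeas).mpr (Or.inl rfl)) _⟩

theorem sigm_nonneg (t : ℝ) : 0 ≤ sigm t := by
  unfold sigm; positivity

theorem sigm_le_one (t : ℝ) : sigm t ≤ 1 := by
  rw [sigm, div_le_one (by positivity)]; linarith

theorem sub_half_mul_abs_sub_eq {y s : ℝ} (hy : y = 0 ∨ y = 1) (hs₀ : 0 ≤ s) (hs₁ : s ≤ 1) :
    (y - 1 / 2) * |y - s| = 1 / 2 * (y - s) := by
  rcases hy with rfl | rfl
  · rw [abs_of_nonpos (by linarith)]; ring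
  · rw [abs_of_nonneg (by linarith)]; ring

theorem lcc_score_identity_general {d : ℕ}
    (ν : Measure (Evec d))
    (pf : Evec d → ℝ)
    (lam : Evec d) :
    ∫ xy, ((xy.2 - 1 / 2) * accProb lam xy) • xy.1 ∂(jointLaw ν pf) =
      (1 / 2 : ℝ) • ∫ xy, (xy.2 - sigm ⟪lam, xy.1⟫) • xy.1 ∂(jointLaw ν pf) := by
  rw [← integral_smul]
  refine integral_congr_ae ?_
  filter_upwards [jointLaw_ae_label_eq_zero_or_one ν pf] with xy hy
  rw [smul_smul, accProb, sub_half_mul_abs_sub_eq hy (sigm_nonneg _) (sigm_le_one _)]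

/-- The score identity `E[X (Y - 1/2) a_λ(X, Y)] = (1/2) E[X (Y - σ(λ'X))]`:
the gradient of the local case-control subsample risk `Q_λ` at `θ = λ` equals half the
full-population logistic score at `λ` (up to the factor `ā(λ)⁻¹`). -/
theorem lcc_score_identity {d : ℕ}
    (ν : Measure (Evec d)) [IsProbabilityMeasure ν]
    (pf : Evec d → ℝ) (hpf_meas : Measurable pf) (hpf : ∀ x, pf x ∈ Set.Icc (0 : ℝ) 1)
    (hX : Integrable (fun xy : Evec d × ℝ => ‖xy.1‖) (jointLaw ν pf))
    (lam : Evec d) :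
    ∫ xy, ((xy.2 - 1 / 2) * accProb lam xy) • xy.1 ∂(jointLaw ν pf) =
      (1 / 2 : ℝ) • ∫ xy, (xy.2 - sigm ⟪lam, xy.1⟫) • xy.1 ∂(jointLaw ν pf) :=
  lcc_score_identity_general ν pf lam
end
end

section
/- Assume E‖X‖ < ∞, nonseparability, and that there is no nonzero v ∈ ℝ^p with E|v'X| = 0. Let θ* = argmin_θ E[ρ(θ; X, Y)] be the population risk minimizer (best linear predictor) for P. Then θ* = argmin_θ Q_{θ*}(θ) = θ̄(θ*); that is, local case-control sampling with pilot equal to θ* has population optimum exactly θ*. -/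
open MeasureTheory ProbabilityTheory Real Filter
open scoped ENNReal NNReal RealInnerProductSpace Topology BoundedContinuousFunction

noncomputable section

variable {d : ℕ}

/-! The logistic loss satisfies `ρ(w; x, y) = log 2 + (1/2 - y) w'x + log cosh (w'x / 2)`, and
for `y ∈ {0, 1}` the acceptance weight satisfies `a_λ(x, y) (1/2 - y) = (σ(λ'x) - y) / 2`. Against
`a_λ dP` the linear term thus integrates to half the gradient of the logistic risk at `λ`, which
vanishes for `λ = θ*`. Hence `Q_{θ*}(θ) = log 2 + E[a_{θ*} log cosh ((θ - θ*)'X / 2)] / ā(θ*)`,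
which equals `log 2` exactly when `(θ - θ*)'X = 0` almost surely, i.e. when `θ = θ*` by
nondegeneracy. -/

lemma sigm_pos (t : ℝ) : 0 < sigm t := by unfold sigm; positivity

lemma sigm_lt_one (t : ℝ) : sigm t < 1 := by
  unfold sigm
  rw [div_lt_one (by positivity)]
  linarith

@[fun_prop]
lemma continuous_sigm : Continuous sigm := by
  unfold sigm
  exact continuous_exp.div (by fun_prop) fun t => by positivity

lemma hasDerivAt_log_one_add_exp (s : ℝ) :
    HasDerivAt (fun t => log (1 + exp t)) (sigm s) s := by
  simpa [sigm] using ((hasDerivAt_exp s).const_add 1).log (by positivity)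

lemma log_one_add_exp_eq (t : ℝ) : log (1 + exp t) = log 2 + t / 2 + log (cosh (t / 2)) := by
  have h : 1 + exp t = 2 * exp (t / 2) * cosh (t / 2) := by
    have h1 : exp (t / 2) * exp (t / 2) = exp t := by rw [← exp_add]; ring_nf
    have h2 : exp (t / 2) * exp (-(t / 2)) = 1 := by rw [← exp_add]; simp
    rw [cosh_eq]
    linear_combination -h1 - h2
  rw [h, log_mul (by positivity) (cosh_pos _).ne', log_mul two_ne_zero (exp_pos _).ne', log_exp]

lemma log_cosh_nonneg (u : ℝ) : 0 ≤ log (cosh u) := log_nonneg (one_le_cosh u)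

lemma log_cosh_pos {u : ℝ} (hu : u ≠ 0) : 0 < log (cosh u) := log_pos (one_lt_cosh.2 hu)

@[fun_prop]
lemma continuous_log_cosh : Continuous fun u => log (cosh u) :=
  continuous_cosh.log fun u => (cosh_pos u).ne'

lemma log_cosh_le_abs (u : ℝ) : log (cosh u) ≤ |u| := by
  rw [log_le_iff_le_exp (cosh_pos u), ← cosh_abs, cosh_eq]
  have : exp (-|u|) ≤ exp |u| := exp_le_exp.2 (by linarith [abs_nonneg u])
  linarith

lemma logisticLoss_eq_log_cosh (w : Evec d) (xy : Evec d × ℝ) :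
    logisticLoss w xy = log 2 + (1 / 2 - xy.2) * ⟪w, xy.1⟫ + log (cosh (⟪w, xy.1⟫ / 2)) := by
  rw [logisticLoss, log_one_add_exp_eq]
  ring

lemma hasDerivAt_logisticLoss_line (θ v : Evec d) (xy : Evec d × ℝ) (t : ℝ) :
    HasDerivAt (fun t : ℝ => logisticLoss (θ + t • v) xy)
      ((sigm ⟪θ + t • v, xy.1⟫ - xy.2) * ⟪v, xy.1⟫) t := by
  have hline : HasDerivAt (fun t : ℝ => ⟪θ + t • v, xy.1⟫) ⟪v, xy.1⟫ t := by
    simp only [inner_add_left, real_inner_smul_left]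
    simpa using ((hasDerivAt_id t).mul_const ⟪v, xy.1⟫).const_add ⟪θ, xy.1⟫
  have := (hline.const_mul (-xy.2)).add ((hasDerivAt_log_one_add_exp _).comp t hline)
  exact this.congr_deriv (by ring)

@[fun_prop]
lemma continuous_logisticLoss (w : Evec d) : Continuous (logisticLoss w) := by
  unfold logisticLoss
  fun_prop (disch := exact fun _ => by positivity)

@[fun_prop]
lemma continuous_accProb (lam : Evec d) : Continuous (accProb lam) := by
  unfold accProb; fun_prop

section AcceptanceProbability

variable {lam : Evec d} {xy : Evec d × ℝ}

lemma abs_sigm_sub_le_one {y : ℝ} (hy : y = 0 ∨ y = 1) (s : ℝ) : |sigm s - y| ≤ 1 := by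
  rcases hy with rfl | rfl <;> rw [abs_le] <;> constructor <;> linarith [sigm_pos s, sigm_lt_one s]

lemma accProb_nonneg (lam : Evec d) (xy : Evec d × ℝ) : 0 ≤ accProb lam xy := abs_nonneg _

lemma abs_accProb_le_one (hy : xy.2 = 0 ∨ xy.2 = 1) : |accProb lam xy| ≤ 1 := by
  rw [accProb, abs_abs, abs_sub_comm]; exact abs_sigm_sub_le_one hy _

lemma accProb_pos (hy : xy.2 = 0 ∨ xy.2 = 1) : 0 < accProb lam xy := by
  rw [accProb, abs_pos, sub_ne_zero]
  rcases hy with h | h <;> rw [h]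
  exacts [(sigm_pos _).ne, (sigm_lt_one _).ne']

lemma accProb_mul_half_sub (hy : xy.2 = 0 ∨ xy.2 = 1) :
    accProb lam xy * (1 / 2 - xy.2) = (sigm ⟪lam, xy.1⟫ - xy.2) / 2 := by
  rw [accProb]
  rcases hy with h | h <;> rw [h]
  · rw [abs_of_nonpos (by linarith [sigm_pos ⟪lam, xy.1⟫])]; ring
  · rw [abs_of_nonneg (by linarith [sigm_lt_one ⟪lam, xy.1⟫])]; ring

end AcceptanceProbability

lemma Rpop_eq_integral_div (μ : Measure (Evec d × ℝ)) (lam w : Evec d) :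
    Rpop μ lam w = (∫ xy, accProb lam xy * logisticLoss w xy ∂μ) / aBar μ lam := by
  have hA : 0 ≤ aBar μ lam := integral_nonneg (accProb_nonneg lam)
  rw [Rpop, tiltedLaw, ← integral_div]
  refine (integral_withDensity_eq_integral_smul
    ((continuous_accProb lam).measurable.div_const _).real_toNNReal _).trans ?_
  refine integral_congr_ae (.of_forall fun xy => ?_)
  dsimp only
  rw [NNReal.smul_def, smul_eq_mul, Real.coe_toNNReal _ (div_nonneg (accProb_nonneg lam xy) hA)]
  ring

def HasZeroScore (μ : Measure (Evec d × ℝ)) (lam : Evec d) : Prop :=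
  ∀ v : Evec d, ∫ xy, (sigm ⟪lam, xy.1⟫ - xy.2) * ⟪v, xy.1⟫ ∂μ = 0

section LogisticRisk

variable {μ : Measure (Evec d × ℝ)}

lemma integrable_abs_inner (hX : Integrable (fun xy : Evec d × ℝ => ‖xy.1‖) μ) (w : Evec d) :
    Integrable (fun xy : Evec d × ℝ => |⟪w, xy.1⟫|) μ :=
  (hX.const_mul ‖w‖).mono' (by fun_prop) <| .of_forall fun xy => by
    simpa using abs_real_inner_le_norm w xy.1

variable [IsFiniteMeasure μ]

lemma integrable_of_abs_le_add_abs_inner (hX : Integrable (fun xy : Evec d × ℝ => ‖xy.1‖) μ)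
    {g : Evec d × ℝ → ℝ} (hg : Continuous g) (C : ℝ) (w : Evec d)
    (hb : ∀ᵐ xy ∂μ, |g xy| ≤ C + |⟪w, xy.1⟫|) : Integrable g μ :=
  ((integrable_const C).add (integrable_abs_inner hX w)).mono' hg.aestronglyMeasurable hb

lemma integrable_accProb (hY : ∀ᵐ xy ∂μ, xy.2 = 0 ∨ xy.2 = 1) (lam : Evec d) :
    Integrable (accProb lam) μ :=
  (integrable_const 1).mono' (continuous_accProb lam).aestronglyMeasurable <| by
    filter_upwards [hY] with xy hy
    exact abs_accProb_le_one hy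

lemma aBar_pos [NeZero μ] (hY : ∀ᵐ xy ∂μ, xy.2 = 0 ∨ xy.2 = 1) (lam : Evec d) :
    0 < aBar μ lam := by
  refine (integral_nonneg (accProb_nonneg lam)).lt_of_ne' fun h => NeZero.ne μ ?_
  have hzero :=
    (integral_eq_zero_iff_of_nonneg (accProb_nonneg lam) (integrable_accProb hY lam)).1 h
  rw [← ae_eq_bot, ← eventually_false_iff_eq_bot]
  filter_upwards [hzero, hY] with xy h0 hy using (accProb_pos hy).ne' h0

variable (hX : Integrable (fun xy : Evec d × ℝ => ‖xy.1‖) μ)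
  (hY : ∀ᵐ xy ∂μ, xy.2 = 0 ∨ xy.2 = 1)
include hX hY

lemma integrable_logisticLoss (w : Evec d) : Integrable (logisticLoss w) μ := by
  refine integrable_of_abs_le_add_abs_inner hX (continuous_logisticLoss w) (log 2) w ?_
  filter_upwards [hY] with xy hy
  have hhalf : |1 / 2 - xy.2| = 1 / 2 := by rcases hy with h | h <;> norm_num [h]
  have hcosh := log_cosh_le_abs (⟪w, xy.1⟫ / 2)
  rw [logisticLoss_eq_log_cosh]
  calc |log 2 + (1 / 2 - xy.2) * ⟪w, xy.1⟫ + log (cosh (⟪w, xy.1⟫ / 2))|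
      ≤ |log 2| + |(1 / 2 - xy.2) * ⟪w, xy.1⟫| + |log (cosh (⟪w, xy.1⟫ / 2))| := abs_add_three _ _ _
    _ ≤ log 2 + |⟪w, xy.1⟫| := by
      rw [abs_of_pos (log_pos one_lt_two), abs_mul, hhalf,
        abs_of_nonneg (log_cosh_nonneg _), abs_div, abs_two] at *
      linarith

lemma hasZeroScore_of_forall_integral_logisticLoss_le {θ : Evec d}
    (hθ : ∀ θ', ∫ xy, logisticLoss θ xy ∂μ ≤ ∫ xy, logisticLoss θ' xy ∂μ) :
    HasZeroScore μ θ := by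
  intro v
  have hderiv := (hasDerivAt_integral_of_dominated_loc_of_deriv_le (x₀ := (0 : ℝ))
    (F := fun t xy => logisticLoss (θ + t • v) xy)
    (F' := fun t xy => (sigm ⟪θ + t • v, xy.1⟫ - xy.2) * ⟪v, xy.1⟫)
    (bound := fun xy => |⟪v, xy.1⟫|) Filter.univ_mem
    (.of_forall fun t => (continuous_logisticLoss _).aestronglyMeasurable)
    (by simpa using integrable_logisticLoss hX hY θ) (by fun_prop) ?_
    (integrable_abs_inner hX v) (.of_forall fun xy t _ => hasDerivAt_logisticLoss_line θ v xy t)).2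
  · have hmin : IsLocalMin (fun t : ℝ => ∫ xy, logisticLoss (θ + t • v) xy ∂μ) 0 :=
      .of_forall fun t => by simpa using hθ (θ + t • v)
    simpa using hmin.hasDerivAt_eq_zero hderiv
  · filter_upwards [hY] with xy hy t _
    rw [norm_mul, Real.norm_eq_abs, Real.norm_eq_abs]
    exact mul_le_of_le_one_left (abs_nonneg _) (abs_sigm_sub_le_one hy _)

lemma integrable_accProb_mul_log_cosh (lam w : Evec d) :
    Integrable (fun xy => accProb lam xy * log (cosh (⟪w, xy.1⟫ / 2))) μ := by
  refine integrable_of_abs_le_add_abs_inner hX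
    ((continuous_accProb lam).mul (continuous_log_cosh.comp (by fun_prop))) 0 w ?_
  filter_upwards [hY] with xy hy
  have hle := log_cosh_le_abs (⟪w, xy.1⟫ / 2)
  rw [abs_div, abs_two] at hle
  rw [abs_mul, abs_of_nonneg (log_cosh_nonneg _), zero_add]
  nlinarith [mul_le_mul_of_nonneg_right (abs_accProb_le_one (lam := lam) hy)
    (log_cosh_nonneg (⟪w, xy.1⟫ / 2)), abs_nonneg ⟪w, xy.1⟫]

lemma integral_accProb_mul_logisticLoss {lam : Evec d} (hlam : HasZeroScore μ lam) (w : Evec d) :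
    ∫ xy, accProb lam xy * logisticLoss w xy ∂μ
      = log 2 * aBar μ lam + ∫ xy, accProb lam xy * log (cosh (⟪w, xy.1⟫ / 2)) ∂μ := by
  have hsplit : (fun xy => accProb lam xy * logisticLoss w xy) =ᵐ[μ] fun xy =>
      log 2 * accProb lam xy + (sigm ⟪lam, xy.1⟫ - xy.2) * ⟪w, xy.1⟫ / 2
        + accProb lam xy * log (cosh (⟪w, xy.1⟫ / 2)) := by
    filter_upwards [hY] with xy hy
    have := accProb_mul_half_sub (lam := lam) hy
    rw [logisticLoss_eq_log_cosh]
    linear_combination ⟪w, xy.1⟫ * this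
  have hacc := integrable_accProb hY lam
  have hlin : Integrable (fun xy => (sigm ⟪lam, xy.1⟫ - xy.2) * ⟪w, xy.1⟫ / 2) μ :=
    integrable_of_abs_le_add_abs_inner hX (by fun_prop) 0 w <| by
      filter_upwards [hY] with xy hy
      rw [abs_div, abs_two, abs_mul, zero_add]
      nlinarith [abs_sigm_sub_le_one hy ⟪lam, xy.1⟫, abs_nonneg ⟪w, xy.1⟫]
  have hcosh := integrable_accProb_mul_log_cosh hX hY lam w
  rw [integral_congr_ae hsplit, integral_add ?_ hcosh, integral_add (hacc.const_mul _) hlin,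
    integral_const_mul, integral_div, hlam, aBar, zero_div, add_zero]
  exact (hacc.const_mul _).add hlin

lemma Qpop_eq_log_two_add [NeZero μ] {lam : Evec d} (hlam : HasZeroScore μ lam) (θ : Evec d) :
    Qpop μ lam θ
      = log 2 + (∫ xy, accProb lam xy * log (cosh (⟪θ - lam, xy.1⟫ / 2)) ∂μ) / aBar μ lam := by
  rw [Qpop, Rpop_eq_integral_div, integral_accProb_mul_logisticLoss hX hY hlam, add_div,
    mul_div_cancel_right₀ _ (aBar_pos hY lam).ne']

lemma Qpop_self [NeZero μ] {lam : Evec d} (hlam : HasZeroScore μ lam) :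
    Qpop μ lam lam = log 2 := by
  simp [Qpop_eq_log_two_add hX hY hlam]

lemma Qpop_self_le [NeZero μ] {lam : Evec d} (hlam : HasZeroScore μ lam) (θ : Evec d) :
    Qpop μ lam lam ≤ Qpop μ lam θ := by
  rw [Qpop_self hX hY hlam, Qpop_eq_log_two_add hX hY hlam, le_add_iff_nonneg_right]
  exact div_nonneg (integral_nonneg fun xy => mul_nonneg (accProb_nonneg lam xy)
    (log_cosh_nonneg _)) (aBar_pos hY lam).le

lemma eq_of_Qpop_le_Qpop_self [NeZero μ] (hnd : NonDegen μ) {lam : Evec d}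
    (hlam : HasZeroScore μ lam) {θ : Evec d} (hθ : Qpop μ lam θ ≤ Qpop μ lam lam) : θ = lam := by
  by_contra hne
  refine hnd (θ - lam) (sub_ne_zero.2 hne) (integral_eq_zero_of_ae ?_)
  rw [Qpop_self hX hY hlam, Qpop_eq_log_two_add hX hY hlam, add_le_iff_nonpos_right,
    div_le_iff₀ (aBar_pos hY lam), zero_mul] at hθ
  have hnonneg : 0 ≤ fun xy => accProb lam xy * log (cosh (⟪θ - lam, xy.1⟫ / 2)) :=
    fun xy => mul_nonneg (accProb_nonneg lam xy) (log_cosh_nonneg _)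
  have hzero := (integral_eq_zero_iff_of_nonneg hnonneg
    (integrable_accProb_mul_log_cosh hX hY lam _)).1 (hθ.antisymm (integral_nonneg hnonneg))
  filter_upwards [hzero, hY] with xy h0 hy
  rw [Pi.zero_apply, abs_eq_zero]
  by_contra hv
  exact (mul_pos (accProb_pos hy) (log_cosh_pos (div_ne_zero hv two_ne_zero))).ne' h0

end LogisticRisk

section JointLaw

variable (ν : Measure (Evec d)) {pf : Evec d → ℝ}

lemma measurable_jointLaw_kernel (hpf_meas : Measurable pf) :
    Measurable fun x : Evec d => ENNReal.ofReal (pf x) • Measure.dirac (x, (1 : ℝ)) +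
      ENNReal.ofReal (1 - pf x) • Measure.dirac (x, (0 : ℝ)) := by
  refine Measure.measurable_of_measurable_coe _ fun s hs => ?_
  simp only [Measure.add_apply, Measure.smul_apply, smul_eq_mul, Measure.dirac_apply' _ hs]
  fun_prop (disch := measurability)

lemma ae_snd_jointLaw (hpf_meas : Measurable pf) :
    ∀ᵐ xy ∂jointLaw ν pf, xy.2 = 0 ∨ xy.2 = 1 := by
  have hS : MeasurableSet {xy : Evec d × ℝ | ¬(xy.2 = 0 ∨ xy.2 = 1)} := by measurability
  rw [ae_iff, jointLaw, Measure.bind_apply hS (measurable_jointLaw_kernel hpf_meas).aemeasurable]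
  simp

lemma isProbabilityMeasure_jointLaw [IsProbabilityMeasure ν] (hpf_meas : Measurable pf)
    (hpf : ∀ x, pf x ∈ Set.Icc (0 : ℝ) 1) : IsProbabilityMeasure (jointLaw ν pf) := by
  constructor
  rw [jointLaw, Measure.bind_apply MeasurableSet.univ
    (measurable_jointLaw_kernel hpf_meas).aemeasurable]
  have hmass : ∀ x, ENNReal.ofReal (pf x) + ENNReal.ofReal (1 - pf x) = 1 := fun x => by
    rw [← ENNReal.ofReal_add (hpf x).1 (sub_nonneg.2 (hpf x).2)]
    simp
  simp [hmass]

end JointLaw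

theorem lcc_pilot_at_thetaStar_fixed_point_general {d : ℕ}
    (ν : Measure (Evec d)) [IsProbabilityMeasure ν]
    (pf : Evec d → ℝ) (hpf_meas : Measurable pf) (hpf : ∀ x, pf x ∈ Set.Icc (0 : ℝ) 1)
    (hX : Integrable (fun xy : Evec d × ℝ => ‖xy.1‖) (jointLaw ν pf))
    (hnd : NonDegen (jointLaw ν pf))
    (θstar : Evec d)
    (hθstar : ∀ θ : Evec d,
      ∫ xy, logisticLoss θstar xy ∂(jointLaw ν pf) ≤ ∫ xy, logisticLoss θ xy ∂(jointLaw ν pf)) :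
    (∀ θ : Evec d, Qpop (jointLaw ν pf) θstar θstar ≤ Qpop (jointLaw ν pf) θstar θ) ∧
    ∀ θm : Evec d, (∀ θ : Evec d, Qpop (jointLaw ν pf) θstar θm ≤ Qpop (jointLaw ν pf) θstar θ) →
      θm = θstar := by
  have := isProbabilityMeasure_jointLaw ν hpf_meas hpf
  have hY := ae_snd_jointLaw ν hpf_meas
  have hfoc := hasZeroScore_of_forall_integral_logisticLoss_le hX hY hθstar
  exact ⟨Qpop_self_le hX hY hfoc,
    fun θm hθm => eq_of_Qpop_le_Qpop_self hX hY hnd hfoc (hθm θstar)⟩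

/-- **Proposition 1.** Assume `E‖X‖ < ∞`, nonseparability and nondegeneracy,
and let `θ*` be the population risk minimizer (best linear predictor) for `P`. Then `θ*`
is the unique minimizer of `Q_{θ*}`, i.e. `θ* = argmin_θ Q_{θ*}(θ) = θ̄(θ*)`. -/
theorem lcc_pilot_at_thetaStar_fixed_point {d : ℕ}
    (ν : Measure (Evec d)) [IsProbabilityMeasure ν]
    (pf : Evec d → ℝ) (hpf_meas : Measurable pf) (hpf : ∀ x, pf x ∈ Set.Icc (0 : ℝ) 1)
    (hX : Integrable (fun xy : Evec d × ℝ => ‖xy.1‖) (jointLaw ν pf))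
    (hnd : NonDegen (jointLaw ν pf)) (hns : NonSep (jointLaw ν pf))
    (θstar : Evec d)
    (hθstar : ∀ θ : Evec d,
      ∫ xy, logisticLoss θstar xy ∂(jointLaw ν pf) ≤ ∫ xy, logisticLoss θ xy ∂(jointLaw ν pf)) :
    (∀ θ : Evec d, Qpop (jointLaw ν pf) θstar θstar ≤ Qpop (jointLaw ν pf) θstar θ) ∧
    ∀ θm : Evec d, (∀ θ : Evec d, Qpop (jointLaw ν pf) θstar θm ≤ Qpop (jointLaw ν pf) θstar θ) →
      θm = θstar :=
  lcc_pilot_at_thetaStar_fixed_point_general ν pf hpf_meas hpf hX hnd θstar hθstar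
end
end
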